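/- arXiv:2005.01402 — 2 statements merged into one kernel-verified Lean document; each statement's English description precedes it below -/
import Mathlib

section
/- In the electricity pool model (P2), for every load profile l ∈ ℝ^T with l_t ≥ 0 and Σ_{t=1}^T l_t > 0, the marginal system cost impact MCI(E) = (1/Σ_t l_t)·Σ_{t=1}^T (a·g*_t(E) + b)·l_t converges to a·d̄ + b as E → ∞. -/
open Finset Filter

/-- Feasibility for the electricity pool model (P2) at storage capacity `E`:
the states of charge `x_k = E/2 + ∑_{t ≤ k} u t` (with `x_0 = E/2`) satisfy
`0 ≤ x_k ≤ E` for all `k`, and the terminal condition `x_T = E/2` holds. -/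
def poolFeasible (T : ℕ) (E : ℝ) (u : Fin T → ℝ) : Prop :=
  (∀ k : Fin T, 0 ≤ E / 2 + ∑ t ∈ Finset.Iic k, u t) ∧
  (∀ k : Fin T, E / 2 + ∑ t ∈ Finset.Iic k, u t ≤ E) ∧
  E / 2 + ∑ t, u t = E / 2

/-- Total generation cost `∑ t C (d t + u t)` with `C g = (1/2)·a·g² + b·g + c`. -/
noncomputable def poolCost (T : ℕ) (a b c : ℝ) (d u : Fin T → ℝ) : ℝ :=
  ∑ t, ((1 / 2) * a * (d t + u t) ^ 2 + b * (d t + u t) + c)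

/-- Optimal cost `C*(E)` of the pool model (P2). -/
noncomputable def poolCstar (T : ℕ) (a b c : ℝ) (d : Fin T → ℝ) (E : ℝ) : ℝ :=
  sInf {y : ℝ | ∃ u : Fin T → ℝ, poolFeasible T E u ∧ y = poolCost T a b c d u}

/-!
A feasible control has `∑ u = 0`, so total generation is always `T·d̄`, and for a quadratic cost
`∑ C(g t) = T·C(d̄) + (a/2)·∑ (g t - d̄)²`. Once `E ≥ 2·∑ |d t - d̄|` the flat profile `g ≡ d̄` is
feasible, so it is the unique optimum, and `MCI(E)` is then the constant `a·d̄ + b`.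
-/

open Fintype
open scoped BigOperators

lemma sum_quadratic_eq_card_mul_add_sum_sq {ι : Type*} [Fintype ι] (a b c : ℝ) (g : ι → ℝ) :
    ∑ t, ((1 / 2) * a * g t ^ 2 + b * g t + c) =
      card ι * ((1 / 2) * a * (𝔼 s, g s) ^ 2 + b * (𝔼 s, g s) + c) +
        a / 2 * ∑ t, (g t - 𝔼 s, g s) ^ 2 := by
  set m := 𝔼 s, g s
  have hdev : ∑ t, (g t - m) = 0 := sum_balance g
  calc ∑ t, ((1 / 2) * a * g t ^ 2 + b * g t + c)
      = ∑ t, (((1 / 2) * a * m ^ 2 + b * m + c) + (a * m + b) * (g t - m) +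
          a / 2 * (g t - m) ^ 2) := sum_congr rfl fun t _ ↦ by ring
    _ = _ := by
      rw [sum_add_distrib, sum_add_distrib, ← mul_sum, ← mul_sum, hdev, sum_const, card_univ,
        nsmul_eq_mul, mul_zero, add_zero]

noncomputable def poolFlatCost (T : ℕ) (a b c : ℝ) (d : Fin T → ℝ) : ℝ :=
  T * ((1 / 2) * a * (𝔼 t, d t) ^ 2 + b * (𝔼 t, d t) + c)

section Pool

variable {T : ℕ} {a b c E : ℝ} {d u : Fin T → ℝ}

lemma sum_eq_zero_of_poolFeasible (hu : poolFeasible T E u) : ∑ t, u t = 0 :=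
  add_eq_left.mp hu.2.2

lemma poolCost_eq_of_sum_eq_zero (hu : ∑ t, u t = 0) :
    poolCost T a b c d u = poolFlatCost T a b c d +
      a / 2 * ∑ t, (d t + u t - 𝔼 s, d s) ^ 2 := by
  have hmean : 𝔼 t, (d t + u t) = 𝔼 t, d t := by
    rw [expect_add_distrib, expect_eq_sum_div_card u, hu, zero_div, add_zero]
  rw [poolCost, sum_quadratic_eq_card_mul_add_sum_sq, hmean, Fintype.card_fin, poolFlatCost]

lemma abs_sum_Iic_le_sum_abs (f : Fin T → ℝ) (k : Fin T) :
    |∑ t ∈ Iic k, f t| ≤ ∑ t, |f t| :=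
  (abs_sum_le_sum_abs _ _).trans <|
    sum_le_sum_of_subset_of_nonneg (subset_univ _) fun _ _ _ ↦ abs_nonneg _

/-- `-balance d` is the control `d̄ - d`; its partial sums are bounded by `∑ |d t - d̄| ≤ E / 2`. -/
lemma poolFeasible_neg_balance (hE : 2 * ∑ t, |balance d t| ≤ E) :
    poolFeasible T E (-balance d) := by
  have hbound (k : Fin T) : |∑ t ∈ Iic k, (-balance d) t| ≤ ∑ t, |balance d t| := by
    simpa using abs_sum_Iic_le_sum_abs (-balance d) k
  refine ⟨fun k ↦ ?_, fun k ↦ ?_, ?_⟩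
  · linarith [(abs_le.mp (hbound k)).1]
  · linarith [(abs_le.mp (hbound k)).2]
  · simp

lemma poolCost_neg_balance :
    poolCost T a b c d (-balance d) = poolFlatCost T a b c d := by
  rw [poolCost_eq_of_sum_eq_zero (by simp)]
  simp [balance_apply]

lemma le_poolCost_of_poolFeasible (ha : 0 ≤ a) (hu : poolFeasible T E u) :
    poolFlatCost T a b c d ≤ poolCost T a b c d u := by
  rw [poolCost_eq_of_sum_eq_zero (sum_eq_zero_of_poolFeasible hu)]
  have : 0 ≤ a / 2 * ∑ t, (d t + u t - 𝔼 s, d s) ^ 2 := by positivity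
  linarith

lemma poolCstar_le (ha : 0 ≤ a) (hE : 2 * ∑ t, |balance d t| ≤ E) :
    poolCstar T a b c d E ≤ poolFlatCost T a b c d := by
  have hbdd : BddBelow {y | ∃ v, poolFeasible T E v ∧ y = poolCost T a b c d v} := by
    refine ⟨poolFlatCost T a b c d, ?_⟩
    rintro y ⟨v, hv, rfl⟩
    exact le_poolCost_of_poolFeasible ha hv
  exact csInf_le hbdd ⟨-balance d, poolFeasible_neg_balance hE, poolCost_neg_balance.symm⟩

lemma add_eq_expect_of_poolCost_eq_poolCstar (ha : 0 < a) (hE : 2 * ∑ t, |balance d t| ≤ E)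
    (hu : poolFeasible T E u) (hopt : poolCost T a b c d u = poolCstar T a b c d E) (t : Fin T) :
    d t + u t = 𝔼 s, d s := by
  have hle := hopt ▸ poolCstar_le (b := b) (c := c) ha.le hE
  rw [poolCost_eq_of_sum_eq_zero (sum_eq_zero_of_poolFeasible hu)] at hle
  have hsq : ∑ t, (d t + u t - 𝔼 s, d s) ^ 2 = 0 := by
    have : 0 ≤ ∑ t, (d t + u t - 𝔼 s, d s) ^ 2 := by positivity
    nlinarith
  have ht := (Finset.sum_eq_zero_iff_of_nonneg fun s _ ↦ sq_nonneg _).mp hsq t (mem_univ t)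
  exact sub_eq_zero.mp (pow_eq_zero_iff two_ne_zero |>.mp ht)

end Pool

theorem pool_mci_tendsto_general
    (T : ℕ) (a b c : ℝ) (ha : 0 < a) (d : Fin T → ℝ)
    (gstar : ℝ → Fin T → ℝ)
    (hgstar : ∀ E : ℝ, 0 ≤ E → ∃ u : Fin T → ℝ, poolFeasible T E u ∧
      (∀ t, gstar E t = d t + u t) ∧
      poolCost T a b c d u = poolCstar T a b c d E)
    (l : Fin T → ℝ) (hL : 0 < ∑ t, l t) :
    Tendsto
      (fun E : ℝ => (1 / ∑ t, l t) * ∑ t, (a * gstar E t + b) * l t)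
      atTop
      (nhds (a * ((∑ t, d t) / (T : ℝ)) + b)) := by
  have hmean : (∑ t, d t) / (T : ℝ) = 𝔼 t, d t := by
    rw [Fintype.expect_eq_sum_div_card, Fintype.card_fin]
  rw [hmean]
  refine tendsto_const_nhds.congr' ?_
  filter_upwards [eventually_ge_atTop (2 * ∑ t, |balance d t|)] with E hE
  obtain ⟨u, hu, hgu, hopt⟩ := hgstar E ((by positivity : (0 : ℝ) ≤ _).trans hE)
  have hflat (t : Fin T) : gstar E t = 𝔼 s, d s :=
    (hgu t).trans (add_eq_expect_of_poolCost_eq_poolCstar ha hE hu hopt t)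
  simp_rw [hflat, ← mul_sum]
  field_simp

/-- In the pool model (P2), for every nonnegative load profile `l`
with `∑ t, l t > 0`, the marginal system cost impact
`MCI(E) = (1/∑ t, l t)·∑ t, (a·g*_t(E) + b)·l t` converges to `a·d̄ + b` as
`E → ∞`. Here `gstar` is any selection of optimal generation profiles. -/
theorem pool_mci_tendsto
    (T : ℕ) (hT : 1 ≤ T) (a b c : ℝ) (ha : 0 < a) (d : Fin T → ℝ)
    (gstar : ℝ → Fin T → ℝ)
    (hgstar : ∀ E : ℝ, 0 ≤ E → ∃ u : Fin T → ℝ, poolFeasible T E u ∧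
      (∀ t, gstar E t = d t + u t) ∧
      poolCost T a b c d u = poolCstar T a b c d E)
    (l : Fin T → ℝ) (hl : ∀ t, 0 ≤ l t) (hL : 0 < ∑ t, l t) :
    Tendsto
      (fun E : ℝ => (1 / ∑ t, l t) * ∑ t, (a * gstar E t + b) * l t)
      atTop
      (nhds (a * ((∑ t, d t) / (T : ℝ)) + b)) :=
  pool_mci_tendsto_general T a b c ha d gstar hgstar l hL
end

section
/- In the electricity pool model (P2), both UBMCI(E) = a·max_{1 ≤ t ≤ T} g*_t(E) + b and LBMCI(E) = a·min_{1 ≤ t ≤ T} g*_t(E) + b converge to a·d̄ + b as E → ∞. -/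
/-!
Once `E ≥ 2 ∑ₜ |d̄ - dₜ|`, the flat profile `gₜ = d̄` is feasible: its running charge never
leaves `[0, E]`. Every feasible control has `∑ₜ uₜ = 0`, so its generation has mean `d̄`, and
expanding the quadratic cost around `d̄` gives `T · C(d̄) + (a/2) ∑ₜ (gₜ - d̄)²`. Hence the flat
profile is the unique optimum for all large `E`, and both `UBMCI` and `LBMCI` are eventually equal
to `a d̄ + b`.
-/

open Finset Filter

lemma Fin.sum_sub_average_eq_zero {T : ℕ} (f : Fin T → ℝ) :
    ∑ t, (f t - (∑ s, f s) / T) = 0 := by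
  rcases Nat.eq_zero_or_pos T with rfl | hT
  · simp
  · rw [sum_sub_distrib, sum_const, nsmul_eq_mul,
      mul_div_cancel₀ _ (by positivity), sub_self]

lemma poolFeasible.sum_eq_zero {T : ℕ} {E : ℝ} {u : Fin T → ℝ} (hu : poolFeasible T E u) :
    ∑ t, u t = 0 := by
  linarith [hu.2.2]

lemma poolFeasible_of_sum_eq_zero {T : ℕ} {E : ℝ} {u : Fin T → ℝ} (hu : ∑ t, u t = 0)
    (hE : 2 * ∑ t, |u t| ≤ E) : poolFeasible T E u := by
  have hpartial : ∀ k : Fin T, |∑ t ∈ Iic k, u t| ≤ E / 2 := fun k =>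
    calc |∑ t ∈ Iic k, u t| ≤ ∑ t ∈ Iic k, |u t| := abs_sum_le_sum_abs _ _
      _ ≤ ∑ t, |u t| := sum_le_sum_of_subset_of_nonneg (subset_univ _) fun t _ _ => abs_nonneg _
      _ ≤ E / 2 := by linarith
  refine ⟨fun k => ?_, fun k => ?_, by rw [hu, add_zero]⟩
  · linarith [(abs_le.1 (hpartial k)).1]
  · linarith [(abs_le.1 (hpartial k)).2]

lemma poolCost_bddBelow {T : ℕ} {a : ℝ} (ha : 0 < a) (b c : ℝ) (d : Fin T → ℝ) (E : ℝ) :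
    BddBelow {y : ℝ | ∃ u : Fin T → ℝ, poolFeasible T E u ∧ y = poolCost T a b c d u} := by
  refine ⟨∑ _t : Fin T, (c - b ^ 2 / (2 * a)), ?_⟩
  rintro y ⟨u, -, rfl⟩
  refine sum_le_sum fun t _ => ?_
  have hsq : 0 ≤ (a * (d t + u t) + b) ^ 2 / (2 * a) := by positivity
  have hexpand : (a * (d t + u t) + b) ^ 2 / (2 * a)
      = 1 / 2 * a * (d t + u t) ^ 2 + b * (d t + u t) + c - (c - b ^ 2 / (2 * a)) := by
    field_simp
    ring
  linarith

lemma poolCost_le_of_eq_poolCstar {T : ℕ} {a : ℝ} (ha : 0 < a) {b c E : ℝ} {d u v : Fin T → ℝ}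
    (hopt : poolCost T a b c d u = poolCstar T a b c d E) (hv : poolFeasible T E v) :
    poolCost T a b c d u ≤ poolCost T a b c d v :=
  hopt ▸ csInf_le (poolCost_bddBelow ha b c d E) ⟨v, hv, rfl⟩

lemma poolCost_eq_add_sum_sq {T : ℕ} (a b c : ℝ) (d : Fin T → ℝ) {u : Fin T → ℝ}
    (hu : ∑ t, u t = 0) :
    poolCost T a b c d u
      = ∑ _t : Fin T, (1 / 2 * a * ((∑ s, d s) / T) ^ 2 + b * ((∑ s, d s) / T) + c)
        + a / 2 * ∑ t, (d t + u t - (∑ s, d s) / T) ^ 2 := by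
  set m := (∑ s, d s) / T
  have hmean : ∑ t, (d t + u t - m) = 0 := by
    have h := Fin.sum_sub_average_eq_zero (fun t => d t + u t)
    rwa [sum_add_distrib, hu, add_zero] at h
  have hexpand : ∀ t, 1 / 2 * a * (d t + u t) ^ 2 + b * (d t + u t) + c
      = (1 / 2 * a * m ^ 2 + b * m + c) + a / 2 * (d t + u t - m) ^ 2
        + (a * m + b) * (d t + u t - m) := fun t => by ring
  rw [poolCost, sum_congr rfl fun t _ => hexpand t, sum_add_distrib, sum_add_distrib,
    ← mul_sum, ← mul_sum, hmean, mul_zero, add_zero]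

lemma eq_average_of_eq_poolCstar {T : ℕ} {a : ℝ} (ha : 0 < a) {b c E : ℝ} {d u : Fin T → ℝ}
    (hE : 2 * ∑ t, |(∑ s, d s) / T - d t| ≤ E) (hu : poolFeasible T E u)
    (hopt : poolCost T a b c d u = poolCstar T a b c d E) (t : Fin T) :
    d t + u t = (∑ s, d s) / T := by
  set m := (∑ s, d s) / T
  have hflat_sum : ∑ s, (m - d s) = 0 := by
    rw [← neg_eq_zero, ← sum_neg_distrib]
    simpa only [neg_sub] using Fin.sum_sub_average_eq_zero d
  have hle := poolCost_le_of_eq_poolCstar ha hopt (poolFeasible_of_sum_eq_zero hflat_sum hE)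
  rw [poolCost_eq_add_sum_sq a b c d hu.sum_eq_zero, poolCost_eq_add_sum_sq a b c d hflat_sum]
    at hle
  have hflat_dev : ∑ s, (d s + (m - d s) - m) ^ 2 = 0 := by simp
  rw [hflat_dev, mul_zero, add_zero, add_le_iff_nonpos_right] at hle
  have hsq_sum : ∑ s, (d s + u s - m) ^ 2 = 0 :=
    le_antisymm (nonpos_of_mul_nonpos_right hle (by positivity))
      (sum_nonneg fun s _ => sq_nonneg _)
  have hsq := (sum_eq_zero_iff_of_nonneg fun s _ => sq_nonneg (d s + u s - m)).1 hsq_sum t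
    (mem_univ t)
  linarith [(pow_eq_zero_iff two_ne_zero).1 hsq]

/-- In the pool model (P2), both
`UBMCI(E) = a·max_t g*_t(E) + b` and `LBMCI(E) = a·min_t g*_t(E) + b`
converge to `a·d̄ + b` as `E → ∞`. Here `gstar` is any selection of optimal
generation profiles. -/
theorem pool_ubmci_lbmci_tendsto
    (T : ℕ) (hT : 1 ≤ T) (a b c : ℝ) (ha : 0 < a) (d : Fin T → ℝ)
    (gstar : ℝ → Fin T → ℝ)
    (hgstar : ∀ E : ℝ, 0 ≤ E → ∃ u : Fin T → ℝ, poolFeasible T E u ∧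
      (∀ t, gstar E t = d t + u t) ∧
      poolCost T a b c d u = poolCstar T a b c d E) :
    Tendsto
      (fun E : ℝ => a * Finset.univ.sup' ⟨⟨0, hT⟩, Finset.mem_univ _⟩ (gstar E) + b)
      atTop (nhds (a * ((∑ t, d t) / (T : ℝ)) + b)) ∧
    Tendsto
      (fun E : ℝ => a * Finset.univ.inf' ⟨⟨0, hT⟩, Finset.mem_univ _⟩ (gstar E) + b)
      atTop (nhds (a * ((∑ t, d t) / (T : ℝ)) + b)) := by
  set m := (∑ t, d t) / (T : ℝ)
  have hflat : ∀ᶠ E in atTop, gstar E = fun _ => m := by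
    filter_upwards [eventually_ge_atTop (2 * ∑ t, |m - d t|)] with E hE
    have hE0 : 0 ≤ E := le_trans (by positivity) hE
    obtain ⟨u, hu, hg, hopt⟩ := hgstar E hE0
    exact funext fun t => (hg t).trans (eq_average_of_eq_poolCstar ha hE hu hopt t)
  constructor
  · refine tendsto_const_nhds.congr' (hflat.mono fun E hE => ?_)
    simp only [hE]
    exact congrArg (a * · + b) (sup'_const _ m).symm
  · refine tendsto_const_nhds.congr' (hflat.mono fun E hE => ?_)
    simp only [hE]
    exact congrArg (a * · + b) (inf'_const _ m).symm
end
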